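/- Let $\kappa,\eta,\nu,\sigma\in\mathbb{R}$ with $\sigma$ constant, and let $W:[0,\infty)\to\mathbb{R}$ be continuous and differentiable. Suppose $v:\mathbb{R}\times[0,\infty)\to\mathbb{R}$ is smooth and satisfies the deterministic generalized Kuramoto–Sivashinsky equation $\partial_t v = -v\,\partial_\chi v - \kappa\,\partial_\chi^2 v - \eta\,\partial_\chi^3 v - \nu\,\partial_\chi^4 v$. Define $u(x,t) = v\left(x - \sigma\int_0^t W(s)\,ds,\; t\right) + \sigma W(t)$. Then $u$ satisfies $\partial_t u = -u\,\partial_x u - \kappa\,\partial_x^2 u - \eta\,\partial_x^3 u - \nu\,\partial_x^4 u + \sigma W'(t)$. -/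

import Mathlib

open intervalIntegral

private lemma iter_shift (f : ℝ → ℝ) (c : ℝ) (n : ℕ) :
    iteratedDeriv n (fun y => f (y + c)) = fun x => iteratedDeriv n f (x + c) := by
  induction n generalizing f with
  | zero => simp [iteratedDeriv_zero]
  | succ n ih =>
    rw [iteratedDeriv_succ']
    have : deriv (fun y => f (y + c)) = fun y => deriv f (y + c) := by
      funext y; exact deriv_comp_add_const f c y
    rw [this, ih (deriv f)]
    funext x
    rw [iteratedDeriv_succ']

private lemma iter_add_const (f : ℝ → ℝ) (a : ℝ) (n : ℕ) (hn : n ≠ 0) :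
    iteratedDeriv n (fun y => f y + a) = iteratedDeriv n f := by
  cases n with
  | zero => exact absurd rfl hn
  | succ n =>
    rw [iteratedDeriv_succ', iteratedDeriv_succ', deriv_add_const']

theorem stmt_2 (κ η ν σ : ℝ)
    (W W' : ℝ → ℝ) (hWc : Continuous W) (hW : ∀ t, HasDerivAt W (W' t) t)
    (v : ℝ → ℝ → ℝ) (hv : ContDiff ℝ (⊤ : ℕ∞) (Function.uncurry v))
    (hveq : ∀ χ t, deriv (fun s => v χ s) t =
      -v χ t * deriv (fun y => v y t) χ
        - κ * iteratedDeriv 2 (fun y => v y t) χ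
        - η * iteratedDeriv 3 (fun y => v y t) χ
        - ν * iteratedDeriv 4 (fun y => v y t) χ)
    (u : ℝ → ℝ → ℝ)
    (hu : ∀ x t, u x t = v (x - σ * ∫ s in (0:ℝ)..t, W s) t + σ * W t) :
    ∀ x t, deriv (fun s => u x s) t =
      -u x t * deriv (fun y => u y t) x
        - κ * iteratedDeriv 2 (fun y => u y t) x
        - η * iteratedDeriv 3 (fun y => u y t) x
        - ν * iteratedDeriv 4 (fun y => u y t) x
        + σ * W' t := by
  intro x t
  set c : ℝ := σ * ∫ s in (0:ℝ)..t, W s with hc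
  set χ : ℝ := x - c with hχ
  set F := fderiv ℝ (Function.uncurry v) (χ, t) with hFdef
  have hF : HasFDerivAt (Function.uncurry v) F (χ, t) :=
    ((hv.differentiable (by simp)) (χ, t)).hasFDerivAt
  -- spatial partial derivative
  have h1 : HasDerivAt (fun y => v y t) (F (1, 0)) χ := by
    have hcurve : HasDerivAt (fun y : ℝ => (y, t)) ((1 : ℝ), (0 : ℝ)) χ :=
      HasDerivAt.prodMk (hasDerivAt_id χ) (hasDerivAt_const χ t)
    exact hF.comp_hasDerivAt χ hcurve
  -- time partial derivative
  have h2 : HasDerivAt (fun s => v χ s) (F (0, 1)) t := by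
    have hcurve : HasDerivAt (fun s : ℝ => (χ, s)) ((0 : ℝ), (1 : ℝ)) t :=
      HasDerivAt.prodMk (hasDerivAt_const t χ) (hasDerivAt_id t)
    exact hF.comp_hasDerivAt t hcurve
  -- derivative of the integral
  have hI : HasDerivAt (fun s => ∫ τ in (0:ℝ)..s, W τ) (W t) t :=
    integral_hasDerivAt_right (hWc.intervalIntegrable 0 t)
      hWc.aestronglyMeasurable.stronglyMeasurableAtFilter hWc.continuousAt
  -- the moving-frame curve
  have hγ : HasDerivAt (fun s : ℝ => (x - σ * ∫ τ in (0:ℝ)..s, W τ, s))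
      ((0 - σ * W t : ℝ), (1 : ℝ)) t :=
    HasDerivAt.prodMk ((hasDerivAt_const t x).sub ((hI.const_mul σ))) (hasDerivAt_id t)
  have hF' : HasFDerivAt (Function.uncurry v) F
      ((fun s : ℝ => (x - σ * ∫ τ in (0:ℝ)..s, W τ, s)) t) := hF
  have hcomp : HasDerivAt (fun s => v (x - σ * ∫ τ in (0:ℝ)..s, W τ) s)
      (F (0 - σ * W t, 1)) t := HasFDerivAt.comp_hasDerivAt
      (f := fun s : ℝ => (x - σ * ∫ τ in (0:ℝ)..s, W τ, s)) t hF' hγ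
  have hut : HasDerivAt (fun s => u x s) (F (0 - σ * W t, 1) + σ * W' t) t := by
    have := hcomp.add ((hW t).const_mul σ)
    refine this.congr_of_eventuallyEq ?_
    filter_upwards with s
    rw [hu x s]; rfl
  -- linearity of F
  have hlin : F (0 - σ * W t, 1) = -(σ * W t) * F (1, 0) + F (0, 1) := by
    have : ((0 - σ * W t : ℝ), (1 : ℝ)) =
        (-(σ * W t)) • ((1 : ℝ), (0 : ℝ)) + ((0 : ℝ), (1 : ℝ)) := by
      simp [Prod.ext_iff]
    rw [this, map_add, map_smul]
    simp [smul_eq_mul]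
  -- spatial derivatives of u in terms of v
  have hspace : (fun y => u y t) = fun y => v (y + (-c)) t + σ * W t := by
    funext y
    rw [hu y t, ← hc, sub_eq_add_neg]
  have hd1 : deriv (fun y => u y t) x = deriv (fun y => v y t) χ := by
    rw [hspace, deriv_add_const, deriv_comp_add_const (fun y => v y t) (-c) x, hχ,
      sub_eq_add_neg]
  have hdn : ∀ n : ℕ, n ≠ 0 →
      iteratedDeriv n (fun y => u y t) x = iteratedDeriv n (fun y => v y t) χ := by
    intro n hn
    rw [hspace, iter_add_const _ _ _ hn, iter_shift (fun y => v y t) (-c) n]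
    rw [hχ, sub_eq_add_neg]
  have hux : u x t = v χ t + σ * W t := by rw [hu x t, ← hc, ← hχ]
  have e2 : F (0, 1) = -v χ t * deriv (fun y => v y t) χ
      - κ * iteratedDeriv 2 (fun y => v y t) χ
      - η * iteratedDeriv 3 (fun y => v y t) χ
      - ν * iteratedDeriv 4 (fun y => v y t) χ := h2.deriv.symm.trans (hveq χ t)
  rw [hut.deriv, hlin, e2, ← h1.deriv, hux, hd1,
    hdn 2 (by norm_num), hdn 3 (by norm_num), hdn 4 (by norm_num)]
  ring
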